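/- In Λ⊕^cbv, if V is a value and V → 𝔪, then 𝔪 is a singleton [W] with W a value, and the step is a β_v-step. Consequently, if 𝔪 ⇒ 𝔪' then μ(𝒱) ≤ μ'(𝒱), where μ, μ' are the probability distributions associated to 𝔪, 𝔪' and 𝒱 is the set of values. -/

import Mathlib

open scoped NNReal ENNReal

/-- A (raw) multidistribution on `X`: a finite multiset of weighted elements. -/
abbrev MDist (X : Type) := Multiset (ℝ≥0 × X)

namespace MDist

/-- Scalar multiplication of a multidistribution. -/
def scale {X : Type} (p : ℝ≥0) (m : MDist X) : MDist X :=
  m.map fun q => (p * q.1, q.2)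

/-- The singleton multidistribution `[1 M]`. -/
def single {X : Type} (M : X) : MDist X := {(1, M)}

/-- A multidistribution is proper when every weight lies in `(0,1]` and the
weights sum to at most `1`. -/
def Proper {X : Type} (m : MDist X) : Prop :=
  (∀ q ∈ m, 0 < q.1 ∧ q.1 ≤ 1) ∧ (m.map Prod.fst).sum ≤ 1

/-- The probability that the distribution associated to a multidistribution
assigns to an event `A`. -/
noncomputable def mass {X : Type} (m : MDist X) (A : Set X) : ℝ≥0∞ :=
  (m.map fun q => A.indicator (fun _ => (q.1 : ℝ≥0∞)) q.2).sum

end MDist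

/-- One component of the lifting: either keep the term or perform a step. -/
def LiftTerm {X : Type} (r : X → MDist X → Prop) (M : X) (m : MDist X) : Prop :=
  m = MDist.single M ∨ r M m

/-- The lifting of a relation `r ⊆ X × MDist X` to a binary relation on
multidistributions. -/
inductive Lift {X : Type} (r : X → MDist X → Prop) : MDist X → MDist X → Prop
  | nil : Lift r 0 0
  | cons {p : ℝ≥0} {M : X} {m s t : MDist X} :
      LiftTerm r M m → Lift r s t → Lift r ((p, M) ::ₘ s) (MDist.scale p m + t)
/-- Terms of `Λ⊕` (de Bruijn representation). -/
inductive Term : Type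
  | var : ℕ → Term
  | lam : Term → Term
  | app : Term → Term → Term
  | choice : Term → Term → Term
deriving DecidableEq

namespace Term

/-- Shifting of de Bruijn indices above a cutoff. -/
def liftAux (c : ℕ) : Term → Term
  | var k => if k < c then var k else var (k + 1)
  | lam M => lam (liftAux (c + 1) M)
  | app M N => app (liftAux c M) (liftAux c N)
  | choice M N => choice (liftAux c M) (liftAux c N)

/-- Capture-avoiding substitution `M[N/j]`. -/
def subst : Term → ℕ → Term → Term
  | var k, j, N => if k = j then N else if j < k then var (k - 1) else var k
  | lam M, j, N => lam (subst M (j + 1) (liftAux 0 N))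
  | app M P, j, N => app (subst M j N) (subst P j N)
  | choice M P, j, N => choice (subst M j N) (subst P j N)

/-- Values: variables and abstractions. -/
inductive IsValue : Term → Prop
  | var (n : ℕ) : IsValue (var n)
  | lam (M : Term) : IsValue (lam M)

/-- `β_v`-reduction, closed under arbitrary contexts. -/
inductive BetaStep : Term → Term → Prop
  | beta {M V : Term} : IsValue V → BetaStep (app (lam M) V) (subst M 0 V)
  | appL {M M' N : Term} : BetaStep M M' → BetaStep (app M N) (app M' N)
  | appR {M N N' : Term} : BetaStep N N' → BetaStep (app M N) (app M N')
  | lam {M M' : Term} : BetaStep M M' → BetaStep (lam M) (lam M')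
  | chL {M M' N : Term} : BetaStep M M' → BetaStep (choice M N) (choice M' N)
  | chR {M N N' : Term} : BetaStep N N' → BetaStep (choice M N) (choice M N')

/-- Surface `β_v`-reduction: closure under surface contexts `S ::= □ | MS | SM`. -/
inductive SurfBetaStep : Term → Term → Prop
  | beta {M V : Term} : IsValue V → SurfBetaStep (app (lam M) V) (subst M 0 V)
  | appL {M M' N : Term} : SurfBetaStep M M' → SurfBetaStep (app M N) (app M' N)
  | appR {M N N' : Term} : SurfBetaStep N N' → SurfBetaStep (app M N) (app M N')

/-- `PlusStep M A B` holds when `M = S(P ⊕ Q)`, `A = S(P)`, `B = S(Q)` for a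
surface context `S ::= □ | MS | SM`. -/
inductive PlusStep : Term → Term → Term → Prop
  | choice {M N : Term} : PlusStep (choice M N) M N
  | appL {M A B N : Term} : PlusStep M A B → PlusStep (app M N) (app A N) (app B N)
  | appR {M N A B : Term} : PlusStep N A B → PlusStep (app M N) (app M A) (app M B)

end Term

open Term

/-- The reduction `→_{β_v} ⊆ Λ⊕ × MDST(Λ⊕)`. -/
def betaRed (M : Term) (m : MDist Term) : Prop :=
  ∃ N, BetaStep M N ∧ m = MDist.single N

/-- The probabilistic reduction `→_⊕ ⊆ Λ⊕ × MDST(Λ⊕)`. -/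
def plusRed (M : Term) (m : MDist Term) : Prop :=
  ∃ A B, PlusStep M A B ∧ m = {((1 : ℝ≥0) / 2, A), ((1 : ℝ≥0) / 2, B)}

/-- The full reduction `→ = →_{β_v} ∪ →_⊕`. -/
def red (M : Term) (m : MDist Term) : Prop := betaRed M m ∨ plusRed M m

/-- Surface reduction `→ₛ`: β_v and ⊕ rules closed under surface contexts. -/
def surfRed (M : Term) (m : MDist Term) : Prop :=
  (∃ N, SurfBetaStep M N ∧ m = MDist.single N) ∨ plusRed M m

/-- A step is deep when it is not a surface step. -/
def deepRed (M : Term) (m : MDist Term) : Prop := red M m ∧ ¬ surfRed M m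

namespace MDist

variable {X : Type}

@[simp]
lemma mass_cons (p : ℝ≥0) (M : X) (s : MDist X) (A : Set X) :
    mass ((p, M) ::ₘ s) A = A.indicator (fun _ => (p : ℝ≥0∞)) M + mass s A := by
  simp [mass]

@[simp]
lemma mass_add (m t : MDist X) (A : Set X) : mass (m + t) A = mass m A + mass t A := by
  simp [mass]

@[simp]
lemma mass_scale (p : ℝ≥0) (m : MDist X) (A : Set X) :
    mass (scale p m) A = p * mass m A := by
  simp only [mass, scale, Multiset.map_map, Function.comp_def, ← Multiset.sum_map_mul_left]
  refine congrArg Multiset.sum (Multiset.map_congr rfl fun q _ => ?_)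
  by_cases h : q.2 ∈ A <;> simp [h]

lemma mass_single_of_mem {M : X} {A : Set X} (h : M ∈ A) : mass (single M) A = 1 := by
  simp [mass, single, h]

end MDist

open MDist

theorem Lift.mass_le_mass {X : Type} {r : X → MDist X → Prop} {A : Set X}
    (hA : ∀ M ∈ A, ∀ m, r M m → 1 ≤ mass m A) {m m' : MDist X} (h : Lift r m m') :
    mass m A ≤ mass m' A := by
  induction h with
  | nil => rfl
  | @cons p M m s t hstep _ ih =>
    rw [mass_cons, mass_add, mass_scale]
    refine add_le_add ?_ ih
    by_cases hM : M ∈ A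
    · have hone : 1 ≤ mass m A := by
        rcases hstep with rfl | hr
        · exact (mass_single_of_mem hM).ge
        · exact hA M hM m hr
      simpa [hM] using le_mul_of_one_le_right zero_le hone
    · simp [hM]

theorem Term.IsValue.red_eq_single {V : Term} {m : MDist Term} (hV : IsValue V) (h : red V m) :
    ∃ W, IsValue W ∧ m = single W ∧ betaRed V m := by
  rcases h with ⟨N, hs, hm⟩ | ⟨A, B, hs, _⟩
  · cases hV with
    | var n => cases hs
    | lam M =>
      cases hs with
      | lam hM => exact ⟨_, IsValue.lam _, hm, _, BetaStep.lam hM, hm⟩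
  · cases hV <;> cases hs

/-- Values only reduce (by β_v) to single values; hence the probability of the
set of values is nondecreasing along lifted reduction steps. -/
theorem value_steps_and_value_mass_monotone :
    (∀ (V : Term) (m : MDist Term), IsValue V → red V m →
      ∃ W, IsValue W ∧ m = MDist.single W ∧ betaRed V m) ∧
    (∀ m m' : MDist Term, Lift red m m' →
      MDist.mass m {M | IsValue M} ≤ MDist.mass m' {M | IsValue M}) := by
  refine ⟨fun V m hV h => hV.red_eq_single h, fun m m' h => h.mass_le_mass ?_⟩
  intro V hV m hr
  obtain ⟨W, hW, rfl, -⟩ := IsValue.red_eq_single hV hr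
  exact (mass_single_of_mem hW).ge
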